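/- Let ψ_t denote the prediction operator of a one-dimensional CIR diffusion with generator (1/2)(α − βz) d/dz + (z/2) d²/dz², stationary with respect to Ga(α, β). Then for m ∈ Z_+ and s ≥ 0, ψ_t(Ga(α+m, β+s)) = Σ_{j=0}^m Bin(m−j; m, p(t)) Ga(α+m−j, β+S_t), where S_t = βs/((β+s)e^{βt/2} − s) and p(t) = S_t/s, i.e., the time-t distribution of the CIR process started from a Ga(α+m, β+s) initial law is the stated finite mixture of gamma distributions. -/

import Mathlib

open Real MeasureTheory ProbabilityTheory

/-- The deterministic dual process `S_t = βs/((β+s)e^{βt/2} - s)`. -/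
noncomputable def Ssol (β s t : ℝ) : ℝ :=
  β * s / ((β + s) * Real.exp (β * t / 2) - s)

/-- Binomial pmf `Bin(r; n, p)`. -/
noncomputable def binPMF (r n : ℕ) (p : ℝ) : ℝ :=
  (n.choose r : ℝ) * p ^ r * (1 - p) ^ (n - r)

/-- The CIR transition function
`P_t(z,·) = Σ_k Po(k; zβ/(e^{βt/2}-1)) Ga(α+k, β+β/(e^{βt/2}-1))`. -/
noncomputable def cirKernel (α β t z : ℝ) : Measure ℝ :=
  Measure.sum fun k : ℕ =>
    ENNReal.ofReal
        (poissonPMFReal (Real.toNNReal (z * β / (Real.exp (β * t / 2) - 1))) k) •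
      gammaMeasure (α + k) (β + β / (Real.exp (β * t / 2) - 1))

/-!
Given `z`, the CIR kernel is a Poisson(`z c`) mixture of `Ga(α+k, β+c)`, with
`c = β/(e^{βt/2}-1)`. Integrating the Poisson weight against `Ga(α+m, β+s)` turns the mixing law
into the negative binomial `NB(α+m, q)`, `q = c/(β+s+c)`. That infinite mixture collapses to the
binomial mixture `Σ_j Bin(j; m, q) Ga(α+j, (β+c)(1-q))`: in the density,
`Γ(α+m+k)/Γ(α+k)` expands by Chu–Vandermonde into falling factorials `k^(j)`, and
`Σ_k k^(j) y^k/k! = y^j e^y`. Finally `q = p(t)` and `(β+c)(1-q) = β + S_t`.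
-/

open Finset Polynomial
open scoped ENNReal NNReal Nat

theorem Real.Gamma_add_natCast_eq_ascPochhammer_mul {x : ℝ} (hx : 0 < x) (n : ℕ) :
    Gamma (x + n) = (ascPochhammer ℝ n).eval x * Gamma x := by
  induction n with
  | zero => simp
  | succ n ih =>
    rw [Nat.cast_succ, ← add_assoc, Real.Gamma_add_one (by positivity), ih,
      ascPochhammer_succ_eval]
    ring

theorem Real.Gamma_add_add_natCast_eq_sum {a : ℝ} (ha : 0 < a) (m k : ℕ) :
    Gamma (a + m + k) = Gamma (a + k) *
      ∑ i ∈ range (m + 1), m.choose i * (Gamma (a + m) / Gamma (a + m - i)) *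
        (k.descFactorial (m - i) : ℝ) := by
  have hfall (i : ℕ) (hi : i ≤ m) :
      (descPochhammer ℤ i).smeval (a + m - 1) = Gamma (a + m) / Gamma (a + m - i) := by
    have hpos : 0 < a + m - i := by
      have : (i : ℝ) ≤ m := by exact_mod_cast hi
      linarith
    rw [descPochhammer_smeval_eq_ascPochhammer, ascPochhammer_smeval_eq_eval,
      eq_div_iff (Real.Gamma_pos_of_pos hpos).ne', show a + m - 1 - i + 1 = a + m - i by ring,
      ← Real.Gamma_add_natCast_eq_ascPochhammer_mul hpos, sub_add_cancel]
  have hrise :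
      Gamma (a + m + k) = Gamma (a + k) * (descPochhammer ℤ m).smeval (a + m - 1 + k) := by
    rw [descPochhammer_smeval_eq_ascPochhammer, ascPochhammer_smeval_eq_eval,
      show a + m - 1 + k - m + 1 = a + k by ring,
      mul_comm, ← Real.Gamma_add_natCast_eq_ascPochhammer_mul (by positivity), add_right_comm]
  rw [hrise, Ring.descPochhammer_smeval_add _ (Commute.all _ _),
    Nat.sum_antidiagonal_eq_sum_range_succ (fun i j => (m.choose i : ℝ) *
      ((descPochhammer ℤ i).smeval (a + m - 1) * (descPochhammer ℤ j).smeval (k : ℝ)))]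
  refine congrArg _ (sum_congr rfl fun i hi => ?_)
  rw [hfall i (Nat.lt_succ_iff.mp (mem_range.mp hi)), descPochhammer_smeval_eq_descFactorial]
  ring

theorem Real.hasSum_descFactorial_mul_pow_div_factorial (y : ℝ) (j : ℕ) :
    HasSum (fun k : ℕ => (k.descFactorial j : ℝ) * y ^ k / k !) (y ^ j * exp y) := by
  have hshift (n : ℕ) :
      ((n + j).descFactorial j : ℝ) * y ^ (n + j) / (n + j)! = y ^ j * (y ^ n / n !) := by
    have h := Nat.factorial_mul_descFactorial (Nat.le_add_left j n)
    rw [Nat.add_sub_cancel] at h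
    rw [← h, Nat.cast_mul, pow_add]
    field_simp
  rw [← hasSum_nat_add_iff' j, sum_eq_zero fun i hi => by
    simp [Nat.descFactorial_eq_zero_iff_lt.mpr (mem_range.mp hi)], sub_zero]
  simp only [hshift]
  rw [Real.exp_eq_exp_ℝ]
  exact (NormedSpace.expSeries_div_hasSum_exp y).mul_left _

theorem MeasureTheory.Measure.bind_sum_smul {α β ι : Type*} [MeasurableSpace α]
    [MeasurableSpace β] [Countable ι] (μ : Measure α) {w : ι → α → ℝ≥0∞}
    (hw : ∀ i, Measurable (w i)) (ν : ι → Measure β) :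
    μ.bind (fun z => Measure.sum fun i => w i z • ν i)
      = Measure.sum fun i => (∫⁻ z, w i z ∂μ) • ν i := by
  have hκ : Measurable fun z => Measure.sum fun i => w i z • ν i :=
    Measure.measurable_of_measurable_coe _ fun S hS => by
      simp only [Measure.sum_apply _ hS, Measure.smul_apply, smul_eq_mul]
      exact Measurable.tsum fun i => (hw i).mul_const _
  ext S hS
  simp only [Measure.bind_apply hS hκ.aemeasurable, Measure.sum_apply _ hS, Measure.smul_apply,
    smul_eq_mul]
  rw [lintegral_tsum fun i => ((hw i).mul_const _).aemeasurable]
  simp only [lintegral_mul_const _ (hw _)]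

noncomputable def negBinPMFReal (A q : ℝ) (k : ℕ) : ℝ :=
  Gamma (A + k) / (Gamma A * k !) * (1 - q) ^ A * q ^ k

theorem negBinPMFReal_nonneg {A q : ℝ} (hA : 0 < A) (hq₀ : 0 ≤ q) (hq₁ : q ≤ 1) (k : ℕ) :
    0 ≤ negBinPMFReal A q k := by
  have := Real.Gamma_pos_of_pos hA
  have := Real.Gamma_pos_of_pos (show 0 < A + k by positivity)
  have : 0 ≤ 1 - q := by linarith
  unfold negBinPMFReal
  positivity

theorem binPMF_nonneg {p : ℝ} (hp₀ : 0 ≤ p) (hp₁ : p ≤ 1) (r n : ℕ) : 0 ≤ binPMF r n p := by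
  have : 0 ≤ 1 - p := by linarith
  unfold binPMF
  positivity

theorem measurable_gammaPDF (a r : ℝ) : Measurable (gammaPDF a r) :=
  (measurable_gammaPDFReal a r).ennreal_ofReal

theorem measurable_ofReal_poissonPMFReal_mul (c : ℝ) (k : ℕ) :
    Measurable fun z : ℝ => ENNReal.ofReal (poissonPMFReal (z * c).toNNReal k) := by
  unfold poissonPMFReal
  fun_prop

theorem gammaPDFReal_mul_poissonPMFReal {A B c z : ℝ} (hA : 0 < A) (hB : 0 < B) (hc : 0 ≤ c)
    (hz : 0 < z) (k : ℕ) :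
    gammaPDFReal A B z * poissonPMFReal (z * c).toNNReal k
      = negBinPMFReal A (c / (B + c)) k * gammaPDFReal (A + k) (B + c) z := by
  have hBc : 0 < B + c := by linarith
  have hGamma : Gamma (A + k) ≠ 0 := (Real.Gamma_pos_of_pos (by positivity)).ne'
  rw [gammaPDFReal, gammaPDFReal, if_pos hz.le, if_pos hz.le, negBinPMFReal, poissonPMFReal,
    Real.coe_toNNReal _ (by positivity), one_sub_div hBc.ne', add_sub_cancel_right,
    Real.div_rpow hB.le hBc.le, div_pow, Real.rpow_add hBc, Real.rpow_natCast,
    show A + k - 1 = A - 1 + k by ring, Real.rpow_add hz, Real.rpow_natCast,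
    show -((B + c) * z) = -(B * z) + -(z * c) by ring, Real.exp_add]
  have := Real.rpow_pos_of_pos hBc A
  have := Real.Gamma_pos_of_pos hA
  field_simp
  ring

theorem lintegral_poissonPMFReal_gammaMeasure {A B c : ℝ} (hA : 0 < A) (hB : 0 < B) (hc : 0 ≤ c)
    (k : ℕ) :
    ∫⁻ z, ENNReal.ofReal (poissonPMFReal (z * c).toNNReal k) ∂gammaMeasure A B
      = ENNReal.ofReal (negBinPMFReal A (c / (B + c)) k) := by
  rw [gammaMeasure, lintegral_withDensity_eq_lintegral_mul _ (measurable_gammaPDF A B)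
    (measurable_ofReal_poissonPMFReal_mul c k)]
  calc ∫⁻ z, (gammaPDF A B * fun z => ENNReal.ofReal (poissonPMFReal (z * c).toNNReal k)) z
      = ∫⁻ z, ENNReal.ofReal (negBinPMFReal A (c / (B + c)) k) * gammaPDF (A + k) (B + c) z := by
        refine lintegral_congr_ae ?_
        filter_upwards [volume.ae_ne 0] with z hz
        rcases hz.lt_or_gt with hneg | hpos
        · simp [gammaPDF_of_neg hneg]
        · rw [Pi.mul_apply, gammaPDF, gammaPDF, ← ENNReal.ofReal_mul (gammaPDFReal_nonneg hA hB z),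
            ← ENNReal.ofReal_mul (negBinPMFReal_nonneg hA (by positivity)
              (div_le_one_of_le₀ (by linarith) (by linarith)) k),
            gammaPDFReal_mul_poissonPMFReal hA hB hc hpos]
    _ = ENNReal.ofReal (negBinPMFReal A (c / (B + c)) k) := by
        rw [lintegral_const_mul _ (measurable_gammaPDF _ _),
          lintegral_gammaPDF_eq_one (by positivity) (by linarith), mul_one]

theorem hasSum_negBinPMFReal_mul_gammaPDFReal {α l q x : ℝ} (hα : 0 < α) (hl : 0 < l)
    (hq : q < 1) (hx : 0 < x) (m : ℕ) :
    HasSum (fun k : ℕ => negBinPMFReal (α + m) q k * gammaPDFReal (α + k) l x)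
      (∑ i ∈ range (m + 1), binPMF (m - i) m q * gammaPDFReal (α + m - i) (l * (1 - q)) x) := by
  have hq' : 0 < 1 - q := by linarith
  set y := q * l * x
  let C := (1 - q) ^ (α + m) * l ^ α * x ^ (α - 1) * exp (-(l * x))
  have hterm (k : ℕ) : negBinPMFReal (α + m) q k * gammaPDFReal (α + k) l x
      = ∑ i ∈ range (m + 1), C * m.choose i / Gamma (α + m - i) *
          ((k.descFactorial (m - i) : ℝ) * y ^ k / k !) := by
    have := Real.Gamma_pos_of_pos (show 0 < α + k by positivity)
    have := Real.Gamma_pos_of_pos (show 0 < α + m by positivity)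
    rw [negBinPMFReal, gammaPDFReal, if_pos hx.le, Real.Gamma_add_add_natCast_eq_sum hα,
      Real.rpow_add hl, Real.rpow_natCast, show α + k - 1 = α - 1 + k by ring,
      Real.rpow_add hx, Real.rpow_natCast]
    simp only [Finset.mul_sum, Finset.sum_mul, Finset.sum_div]
    refine sum_congr rfl fun i _ => ?_
    field_simp
    ring
  have hcoeff (i : ℕ) (hi : i ≤ m) : C * m.choose i / Gamma (α + m - i) * (y ^ (m - i) * exp y)
      = binPMF (m - i) m q * gammaPDFReal (α + m - i) (l * (1 - q)) x := by
    obtain ⟨n, rfl⟩ := Nat.exists_eq_add_of_le hi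
    have hn : α + ((i + n : ℕ) : ℝ) - i = α + n := by push_cast; ring
    simp only [C, y]
    rw [hn, Real.rpow_add hq', Real.rpow_natCast, Nat.add_sub_cancel_left, binPMF,
      Nat.add_sub_cancel, Nat.choose_symm_add, gammaPDFReal, if_pos hx.le,
      Real.rpow_add (by positivity), Real.rpow_natCast,
      show α + n - 1 = α - 1 + n by ring, Real.rpow_add hx, Real.rpow_natCast,
      Real.mul_rpow hl.le hq'.le, mul_pow l (1 - q),
      show -(l * (1 - q) * x) = -(l * x) + q * l * x by ring, Real.exp_add]
    have := Real.Gamma_pos_of_pos (show 0 < α + n by positivity)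
    field_simp
    ring
  simp only [hterm]
  rw [← sum_congr rfl fun i hi => hcoeff i (Nat.lt_succ_iff.mp (mem_range.mp hi))]
  exact hasSum_sum fun i _ =>
    (Real.hasSum_descFactorial_mul_pow_div_factorial y (m - i)).mul_left _

theorem sum_negBinPMFReal_smul_gammaMeasure {α l q : ℝ} (hα : 0 < α) (hl : 0 < l) (hq₀ : 0 ≤ q)
    (hq₁ : q < 1) (m : ℕ) :
    Measure.sum (fun k : ℕ => ENNReal.ofReal (negBinPMFReal (α + m) q k) • gammaMeasure (α + k) l)
      = ∑ i ∈ range (m + 1),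
          ENNReal.ofReal (binPMF (m - i) m q) • gammaMeasure (α + m - i) (l * (1 - q)) := by
  have hdensity : ∀ᵐ x, ∑' k : ℕ,
        ENNReal.ofReal (negBinPMFReal (α + m) q k) * gammaPDF (α + k) l x
      = ∑ i ∈ range (m + 1),
          ENNReal.ofReal (binPMF (m - i) m q) * gammaPDF (α + m - i) (l * (1 - q)) x := by
    filter_upwards [volume.ae_ne 0] with x hx
    rcases hx.lt_or_gt with hneg | hpos
    · simp [gammaPDF_of_neg hneg]
    have hsum := hasSum_negBinPMFReal_mul_gammaPDFReal hα hl hq₁ hpos m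
    have hshape (i : ℕ) (hi : i ∈ range (m + 1)) : 0 < α + m - i := by
      have : (i : ℝ) ≤ m := by exact_mod_cast Nat.lt_succ_iff.mp (mem_range.mp hi)
      linarith
    have hl' : 0 < l * (1 - q) := mul_pos hl (by linarith)
    simp only [gammaPDF,
      ← ENNReal.ofReal_mul (negBinPMFReal_nonneg (A := α + m) (by positivity) hq₀ hq₁.le _),
      ← ENNReal.ofReal_mul (binPMF_nonneg hq₀ hq₁.le _ _)]
    rw [← ENNReal.ofReal_tsum_of_nonneg (fun k => mul_nonneg
        (negBinPMFReal_nonneg (by positivity) hq₀ hq₁.le _)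
        (gammaPDFReal_nonneg (by positivity) hl _)) hsum.summable, hsum.tsum_eq,
      ENNReal.ofReal_sum_of_nonneg fun i hi => mul_nonneg
        (binPMF_nonneg hq₀ hq₁.le _ _) (gammaPDFReal_nonneg (hshape i hi) hl' _)]
  ext S hS
  simp only [Measure.sum_apply _ hS, Measure.finsetSum_apply, Measure.smul_apply, smul_eq_mul,
    gammaMeasure, withDensity_apply _ hS, ← lintegral_const_mul _ (measurable_gammaPDF _ _)]
  rw [← lintegral_tsum fun k => ((measurable_gammaPDF _ _).const_mul _).aemeasurable,
    ← lintegral_finsetSum _ fun i _ => (measurable_gammaPDF _ _).const_mul _]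
  exact lintegral_congr_ae (ae_restrict_of_ae hdensity)

/-- `p(t) = S_t / s` is written as `β/((β+s)e^{βt/2}-s)`, which stays meaningful at `s = 0`. -/
theorem CIR_propagation (α β : ℝ) (hα : 0 < α) (hβ : 0 < β)
    (m : ℕ) (s : ℝ) (hs : 0 ≤ s) (t : ℝ) (ht : 0 < t) :
    (gammaMeasure (α + m) (β + s)).bind (cirKernel α β t)
      = ∑ j ∈ Finset.range (m + 1),
          ENNReal.ofReal
              (binPMF (m - j) m (β / ((β + s) * Real.exp (β * t / 2) - s))) •
            gammaMeasure (α + m - j) (β + Ssol β s t) := by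
  unfold Ssol
  set E := exp (β * t / 2)
  have hE : 1 < E := Real.one_lt_exp_iff.2 (by positivity)
  set c := β / (E - 1)
  have hkernel : cirKernel α β t = fun z => Measure.sum fun k : ℕ =>
      ENNReal.ofReal (poissonPMFReal (z * c).toNNReal k) • gammaMeasure (α + k) (β + c) := by
    funext z
    simp only [cirKernel, mul_div_assoc, E, c]
  have hcE : c * (E - 1) = β := div_mul_cancel₀ _ (by linarith)
  have hc : 0 < c := div_pos hβ (by linarith)
  clear_value c E
  have hB : 0 < β + s := by linarith
  have hden : (β + s) * E - s = (β + s + c) * (E - 1) := by linear_combination (-1 : ℝ) * hcE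
  have hq : c / (β + s + c) = β / ((β + s) * E - s) := by
    rw [hden, ← hcE, mul_div_mul_right _ _ (by linarith)]
  have hrate : (β + c) * (1 - c / (β + s + c)) = β + β * s / ((β + s) * E - s) := by
    have : E - 1 ≠ 0 := by linarith
    rw [hden]
    field_simp
    linear_combination s * hcE
  rw [hkernel, Measure.bind_sum_smul _ (measurable_ofReal_poissonPMFReal_mul c)]
  simp only [lintegral_poissonPMFReal_gammaMeasure (A := α + m) (by positivity) hB hc.le]
  rw [sum_negBinPMFReal_smul_gammaMeasure hα (by positivity) (by positivity)
    ((div_lt_one (by positivity)).2 (by linarith)) m, hrate, hq]
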